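/- Let d ≥ 2, let D ⊆ ℝ^d be a bounded domain (nonempty open connected set), let o ∈ D, and let g : ℝ^d \ {o} → ℝ satisfy: g ≥ 0 and g is subharmonic on ℝ^d \ {o}; g is harmonic on D \ {o}; g = 0 on ℝ^d \ closure(D); and g(x) + K_{d−2}(x,o) is bounded as x → o (x ≠ o). Let S₀ ⊆ ℝ^d be a set with o ∈ int S₀ and with closure(S₀) compact and contained in D. Then g(x) ≥ inf_{y ∈ ∂S₀} g(y) for every x ∈ S₀ \ {o}. -/

import Mathlib

open MeasureTheory Metric Filter Set
open scoped ENNReal Topology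

noncomputable section

/-- The positive part of an extended real number, as an element of `ℝ≥0∞`. -/
def erealToENNReal (a : EReal) : ℝ≥0∞ :=
  if a = ⊤ then ⊤ else ENNReal.ofReal a.toReal

/-- The integral (hence, for a probability measure, the average) of an
`EReal`-valued function, defined as the difference of the lower integrals of its
positive and negative parts. -/
def erealAvg {d : ℕ} (μ : Measure (EuclideanSpace ℝ (Fin d)))
    (f : EuclideanSpace ℝ (Fin d) → EReal) : EReal :=
  ((∫⁻ y, erealToENNReal (f y) ∂μ : ℝ≥0∞) : EReal)
    - ((∫⁻ y, erealToENNReal (-(f y)) ∂μ : ℝ≥0∞) : EReal)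

/-- The normalized (probability) surface measure on the sphere of center `x` and
radius `ρ` in `ℝ^d`, obtained by pushing forward the normalized surface measure on
the unit sphere under `y ↦ x + ρ • y`. -/
def sphereMeasure {d : ℕ} (x : EuclideanSpace ℝ (Fin d)) (ρ : ℝ) :
    Measure (EuclideanSpace ℝ (Fin d)) :=
  Measure.map
    (fun y : Metric.sphere (0 : EuclideanSpace ℝ (Fin d)) 1 =>
      x + ρ • (y : EuclideanSpace ℝ (Fin d)))
    ((((volume : Measure (EuclideanSpace ℝ (Fin d))).toSphere Set.univ)⁻¹ : ℝ≥0∞) •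
      (volume : Measure (EuclideanSpace ℝ (Fin d))).toSphere)

/-- `v : ℝ^d → ℝ ∪ {-∞}` is subharmonic on an open set `U` if it is upper
semicontinuous on `U` and satisfies the sub-mean value inequality on every sphere
whose closed ball is contained in `U`. -/
def SubharmonicOn {d : ℕ} (v : EuclideanSpace ℝ (Fin d) → EReal)
    (U : Set (EuclideanSpace ℝ (Fin d))) : Prop :=
  UpperSemicontinuousOn v U ∧
    ∀ x ∈ U, ∀ ρ : ℝ, 0 < ρ → Metric.closedBall x ρ ⊆ U →
      v x ≤ erealAvg (sphereMeasure x ρ) v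

/-- `v` is harmonic on `U` : finite-valued, continuous, with the mean value equality. -/
def HarmonicOnE {d : ℕ} (v : EuclideanSpace ℝ (Fin d) → EReal)
    (U : Set (EuclideanSpace ℝ (Fin d))) : Prop :=
  ContinuousOn v U ∧ (∀ x ∈ U, v x ≠ ⊥ ∧ v x ≠ ⊤) ∧
    ∀ x ∈ U, ∀ ρ : ℝ, 0 < ρ → Metric.closedBall x ρ ⊆ U →
      v x = erealAvg (sphereMeasure x ρ) v

/-- Real-valued harmonic functions. -/
def HarmonicOnR {d : ℕ} (u : EuclideanSpace ℝ (Fin d) → ℝ)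
    (U : Set (EuclideanSpace ℝ (Fin d))) : Prop :=
  HarmonicOnE (fun x => (u x : EReal)) U

/-- The kernel `K_{d-2}` : `log |x-y|` for `d = 2`, `-|x-y|^{-(d-2)}` for `d ≥ 3`. -/
def greenKernel (d : ℕ) (x y : EuclideanSpace ℝ (Fin d)) : ℝ :=
  if d = 2 then Real.log (dist x y) else -(dist x y) ^ (-((d : ℝ) - 2))

/-- The outer `r`-parallel set `S^{∪ r} = S ∪ ⋃_{x ∈ S} B(x, r)`. -/
def parallelSet {d : ℕ} (S : Set (EuclideanSpace ℝ (Fin d))) (r : ℝ) :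
    Set (EuclideanSpace ℝ (Fin d)) :=
  S ∪ ⋃ x ∈ S, Metric.ball x r

namespace GreenAux

variable {d : ℕ}

local notation "E" => EuclideanSpace ℝ (Fin d)

/-- The normalized surface measure on the unit sphere. -/
def usm (d : ℕ) : Measure (Metric.sphere (0 : EuclideanSpace ℝ (Fin d)) 1) :=
  ((((volume : Measure (EuclideanSpace ℝ (Fin d))).toSphere Set.univ)⁻¹ : ℝ≥0∞) •
      (volume : Measure (EuclideanSpace ℝ (Fin d))).toSphere)

lemma sphereMeasure_eq (x : E) (ρ : ℝ) :
    sphereMeasure x ρ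
      = Measure.map (fun z : Metric.sphere (0:E) 1 => x + ρ • (z : E)) (usm d) := rfl

lemma nontrivE (hd : 1 ≤ d) : Nontrivial (EuclideanSpace ℝ (Fin d)) := by
  apply Module.nontrivial_of_finrank_pos (R := ℝ)
  rw [finrank_euclideanSpace_fin]
  omega

lemma toSphere_univ_pos (hd : 1 ≤ d) :
    (volume : Measure E).toSphere Set.univ ≠ 0 := by
  haveI := nontrivE hd
  rw [Measure.toSphere_apply_univ]
  rw [mul_ne_zero_iff]; constructor
  · simp [finrank_euclideanSpace_fin]; omega
  · exact (measure_ball_pos volume (0 : E) one_pos).ne'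

lemma toSphere_univ_ne_top :
    (volume : Measure E).toSphere Set.univ ≠ ⊤ := measure_ne_top _ _

instance : IsFiniteMeasure (usm d) := by
  unfold usm
  infer_instance

lemma usm_prob (hd : 1 ≤ d) : IsProbabilityMeasure (usm d) := by
  constructor
  rw [usm, Measure.smul_apply, smul_eq_mul]
  exact ENNReal.inv_mul_cancel (toSphere_univ_pos hd) toSphere_univ_ne_top

lemma toSphere_neg (hd : 1 ≤ d) :
    Measure.map (fun z : Metric.sphere (0:E) 1 => -z) (volume : Measure E).toSphere
      = (volume : Measure E).toSphere := by
  have hmeas : Measurable (fun z : Metric.sphere (0:E) 1 => -z) := continuous_neg.measurable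
  refine Measure.ext fun s hs => ?_
  rw [Measure.map_apply hmeas hs]
  have hns : MeasurableSet ((fun z : Metric.sphere (0:E) 1 => -z) ⁻¹' s) := hmeas hs
  rw [Measure.toSphere_apply' _ hns, Measure.toSphere_apply' _ hs]
  congr 1
  have himg : Subtype.val '' ((fun z : Metric.sphere (0:E) 1 => -z) ⁻¹' s)
      = -(Subtype.val '' s) := by
    ext y
    simp only [Set.mem_image, Set.mem_preimage, Set.mem_neg]
    constructor
    · rintro ⟨z, hz, rfl⟩
      exact ⟨-z, hz, rfl⟩
    · rintro ⟨w, hw, hwy⟩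
      refine ⟨-w, by simpa using hw, ?_⟩
      rw [coe_neg_sphere, hwy, neg_neg]
  rw [himg, Set.smul_neg, Measure.measure_neg]

lemma usm_neg (hd : 1 ≤ d) :
    Measure.map (fun z : Metric.sphere (0:E) 1 => -z) (usm d) = usm d := by
  unfold usm
  rw [Measure.map_smul, toSphere_neg hd]

lemma integral_coe_usm (hd : 1 ≤ d) :
    (∫ z, (z : E) ∂(usm d)) = 0 := by
  set b := ∫ z, (z : E) ∂(usm d) with hb
  have hmp : MeasurePreserving (fun z : Metric.sphere (0:E) 1 => -z) (usm d) (usm d) :=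
    ⟨continuous_neg.measurable, usm_neg hd⟩
  have hemb : MeasurableEmbedding (fun z : Metric.sphere (0:E) 1 => -z) := by
    refine (Continuous.isClosedEmbedding continuous_neg ?_).measurableEmbedding
    intro a b hab
    simpa using congrArg Neg.neg hab
  have h1 : (∫ z, ((-z : Metric.sphere (0:E) 1) : E) ∂(usm d)) = b :=
    hmp.integral_comp hemb _
  have h2 : (∫ z, ((-z : Metric.sphere (0:E) 1) : E) ∂(usm d)) = -b := by
    simp only [coe_neg_sphere]
    rw [integral_neg]
  have hbb : b = -b := h1.symm.trans h2
  have h3 : b + b = 0 := by nth_rewrite 2 [hbb]; rw [add_neg_cancel]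
  have := congrArg (fun v => (2⁻¹ : ℝ) • v) (two_smul ℝ b ▸ h3)
  simpa [smul_smul] using this

lemma sphere_map_emb (x : E) {ρ : ℝ} (hρ : 0 < ρ) :
    MeasurableEmbedding (fun z : Metric.sphere (0:E) 1 => x + ρ • (z : E)) := by
  refine (Continuous.isClosedEmbedding
    (continuous_const.add (continuous_subtype_val.const_smul ρ)) ?_).measurableEmbedding
  intro a b hab
  have h1 : ρ • (a : E) = ρ • (b : E) := by
    have := add_left_cancel hab
    exact this
  exact Subtype.ext (smul_right_injective _ hρ.ne' h1)

lemma integrable_usm {F : Type*} [NormedAddCommGroup F]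
    (f : Metric.sphere (0:E) 1 → F) (hf : Continuous f) : Integrable f (usm d) :=
  hf.integrable_of_hasCompactSupport (HasCompactSupport.of_compactSpace _)

lemma coe_ennreal_fin (A : ℝ≥0∞) (hA : A ≠ ⊤) :
    (A : EReal) = ((A.toReal : ℝ) : EReal) := by
  conv_lhs => rw [← ENNReal.ofReal_toReal hA]
  rw [EReal.coe_ennreal_ofReal, max_eq_left ENNReal.toReal_nonneg]

lemma erealAvg_coe (hd : 1 ≤ d) (x : E) {ρ : ℝ} (hρ : 0 < ρ) (f : E → ℝ)
    (hf : Continuous fun z : Metric.sphere (0:E) 1 => f (x + ρ • (z : E))) :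
    erealAvg (sphereMeasure x ρ) (fun y => (f y : EReal))
      = ((∫ z, f (x + ρ • (z : E)) ∂(usm d) : ℝ) : EReal) := by
  haveI := usm_prob hd
  have hemb := sphere_map_emb x hρ
  have hint : Integrable (fun z : Metric.sphere (0:E) 1 => f (x + ρ • (z:E))) (usm d) :=
    integrable_usm _ hf
  have e1 : (∫⁻ y, erealToENNReal ((f y : EReal)) ∂(sphereMeasure x ρ))
      = ∫⁻ z, ENNReal.ofReal (f (x + ρ • (z:E))) ∂(usm d) := by
    rw [sphereMeasure_eq, hemb.lintegral_map]
    refine lintegral_congr fun z => ?_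
    simp only [erealToENNReal, EReal.toReal_coe]
    rw [if_neg (EReal.coe_ne_top _)]
  have e2 : (∫⁻ y, erealToENNReal (-(f y : EReal)) ∂(sphereMeasure x ρ))
      = ∫⁻ z, ENNReal.ofReal (-(f (x + ρ • (z:E)))) ∂(usm d) := by
    rw [sphereMeasure_eq, hemb.lintegral_map]
    refine lintegral_congr fun z => ?_
    rw [← EReal.coe_neg]
    simp only [erealToENNReal, EReal.toReal_coe]
    rw [if_neg (EReal.coe_ne_top _)]
  rw [erealAvg, e1, e2, integral_eq_lintegral_pos_part_sub_lintegral_neg_part hint]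
  have hA : (∫⁻ z, ENNReal.ofReal (f (x + ρ • (z:E))) ∂(usm d)) ≠ ⊤ :=
    hint.lintegral_lt_top.ne
  have hB : (∫⁻ z, ENNReal.ofReal (-(f (x + ρ • (z:E)))) ∂(usm d)) ≠ ⊤ :=
    hint.neg.lintegral_lt_top.ne
  rw [coe_ennreal_fin _ hA, coe_ennreal_fin _ hB, ← EReal.coe_sub]

lemma harmonic_continuousOn {U : Set E} {g : E → ℝ} (hg : HarmonicOnR g U) :
    ContinuousOn g U :=
  (Topology.IsEmbedding.continuousOn_iff EReal.isEmbedding_coe).mpr hg.1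

lemma add_smul_mem_closedBall (x : E) {ρ : ℝ} (hρ : 0 ≤ ρ)
    (z : Metric.sphere (0:E) 1) : x + ρ • (z : E) ∈ Metric.closedBall x ρ := by
  rw [Metric.mem_closedBall, dist_eq_norm, add_sub_cancel_left, norm_smul,
    mem_sphere_zero_iff_norm.mp z.2, mul_one, Real.norm_eq_abs, abs_of_nonneg hρ]

lemma harmonic_mean_value (hd : 1 ≤ d) {U : Set E} {g : E → ℝ}
    (hg : HarmonicOnR g U) {x : E} (hx : x ∈ U) {ρ : ℝ} (hρ : 0 < ρ)
    (hB : Metric.closedBall x ρ ⊆ U) :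
    g x = ∫ z, g (x + ρ • (z : E)) ∂(usm d) := by
  have hgc : ContinuousOn g U := harmonic_continuousOn hg
  have hf : Continuous fun z : Metric.sphere (0:E) 1 => g (x + ρ • (z:E)) :=
    hgc.comp_continuous (continuous_const.add (continuous_subtype_val.const_smul ρ))
      (fun z => hB (add_smul_mem_closedBall x hρ.le z))
  have hmv : ((g x : ℝ) : EReal) = erealAvg (sphereMeasure x ρ) (fun y => ((g y : ℝ) : EReal)) :=
    hg.2.2 x hx ρ hρ hB
  rw [erealAvg_coe hd x hρ g hf] at hmv
  exact_mod_cast hmv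

lemma mean_sq (hd : 1 ≤ d) (x p : E) (ρ : ℝ) :
    (∫ z, ‖x + ρ • (z : E) - p‖^2 ∂(usm d)) = ‖x - p‖^2 + ρ^2 := by
  haveI := usm_prob hd
  have hintc : Integrable (fun z : Metric.sphere (0:E) 1 => (z : E)) (usm d) :=
    integrable_usm _ continuous_subtype_val
  have hinti : Integrable
      (fun z : Metric.sphere (0:E) 1 => (inner ℝ (x - p) ((z:E)) : ℝ)) (usm d) :=
    integrable_usm _ (continuous_const.inner continuous_subtype_val)
  have key : ∀ z : Metric.sphere (0:E) 1,
      ‖x + ρ • (z:E) - p‖^2 = (‖x - p‖^2 + ρ^2) + (2*ρ) * (inner ℝ (x - p) ((z:E)) : ℝ) := by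
    intro z
    have h0 : x + ρ • (z:E) - p = (x - p) + ρ • (z:E) := by abel
    rw [h0, norm_add_sq_real, norm_smul, mem_sphere_zero_iff_norm.mp z.2, mul_one,
      Real.norm_eq_abs, sq_abs, real_inner_smul_right]
    ring
  simp_rw [key]
  rw [integral_add (integrable_const _) (hinti.const_mul _), integral_const, probReal_univ,
    one_smul, integral_const_mul, integral_inner hintc,
    integral_coe_usm hd, inner_zero_right, mul_zero, add_zero]

lemma greenKernel_tendsto_atBot (hd : 2 ≤ d) (o : E) :
    Tendsto (fun y : E => greenKernel d y o) (𝓝[≠] o) atBot := by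
  have hdist : Tendsto (fun y : E => dist y o) (𝓝[≠] o) (𝓝[>] (0:ℝ)) := by
    apply tendsto_nhdsWithin_of_tendsto_nhds_of_eventually_within
    · have h0 : Tendsto (fun y : E => dist y o) (𝓝 o) (𝓝 (dist o o)) :=
        (continuous_id.dist continuous_const).tendsto o
      rw [dist_self] at h0
      exact h0.mono_left nhdsWithin_le_nhds
    · filter_upwards [self_mem_nhdsWithin] with y hy
      exact mem_Ioi.mpr (dist_pos.mpr hy)
  rcases eq_or_ne d 2 with h2 | h2
  · have heq : (fun y : E => greenKernel d y o) = fun y : E => Real.log (dist y o) := by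
      funext y; rw [greenKernel, if_pos h2]
    rw [heq]
    exact Real.tendsto_log_nhdsGT_zero.comp hdist
  · have hd3 : 3 ≤ d := by omega
    have hexp : (0:ℝ) < (d:ℝ) - 2 := by
      have : (3:ℝ) ≤ (d:ℝ) := by exact_mod_cast hd3
      linarith
    have hpow : Tendsto (fun t : ℝ => t ^ (-((d:ℝ)-2))) (𝓝[>] (0:ℝ)) atTop := by
      have hlog : Tendsto (fun t : ℝ => ((d:ℝ)-2) * Real.log t) (𝓝[>] (0:ℝ)) atBot :=
        Real.tendsto_log_nhdsGT_zero.const_mul_atBot hexp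
      have hmul : Tendsto (fun t : ℝ => -(((d:ℝ)-2) * Real.log t)) (𝓝[>] (0:ℝ)) atTop :=
        tendsto_neg_atBot_atTop.comp hlog
      have hexp2 : Tendsto (fun t : ℝ => Real.exp (-(((d:ℝ)-2) * Real.log t)))
          (𝓝[>] (0:ℝ)) atTop := Real.tendsto_exp_atTop.comp hmul
      refine hexp2.congr' ?_
      filter_upwards [self_mem_nhdsWithin] with t ht
      rw [Real.rpow_def_of_pos (mem_Ioi.mp ht)]
      ring_nf
    have hneg : Tendsto (fun t : ℝ => -(t ^ (-((d:ℝ)-2)))) (𝓝[>] (0:ℝ)) atBot :=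
      tendsto_neg_atTop_atBot.comp hpow
    have heq : (fun y : E => greenKernel d y o)
        = (fun t : ℝ => -(t ^ (-((d:ℝ)-2)))) ∘ (fun y : E => dist y o) := by
      funext y; rw [greenKernel, if_neg h2]; rfl
    rw [heq]
    exact hneg.comp hdist

end GreenAux

open GreenAux

/-- Minimum principle for the (generalized) Green function: on `S₀ \ {o}` the Green
function `g` of `D` with pole `o` is bounded below by its infimum over `∂S₀`. -/
theorem green_function_minimum_principle {d : ℕ} (hd : 2 ≤ d)
    (D : Set (EuclideanSpace ℝ (Fin d))) (hDne : D.Nonempty) (hDopen : IsOpen D)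
    (hDconn : IsPreconnected D) (hDbdd : Bornology.IsBounded D)
    (o : EuclideanSpace ℝ (Fin d)) (hoD : o ∈ D)
    (g : EuclideanSpace ℝ (Fin d) → ℝ)
    (hg0 : ∀ x, x ≠ o → 0 ≤ g x)
    (hgsh : SubharmonicOn (fun x => (g x : EReal)) {o}ᶜ)
    (hgh : HarmonicOnR g (D \ {o}))
    (hgz : ∀ x ∉ closure D, g x = 0)
    (hgK : ∃ C : ℝ, ∀ᶠ x in 𝓝[≠] o, |g x + greenKernel d x o| ≤ C)
    (S₀ : Set (EuclideanSpace ℝ (Fin d))) (hoS₀ : o ∈ interior S₀)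
    (hS₀c : IsCompact (closure S₀)) (hS₀D : closure S₀ ⊆ D) :
    ∀ x ∈ S₀ \ {o}, sInf (g '' frontier S₀) ≤ g x := by
  have hd1 : 1 ≤ d := by omega
  haveI := usm_prob hd1
  intro x hx
  obtain ⟨hxS, hxo'⟩ := hx
  have hxo : x ≠ o := hxo'
  set m := sInf (g '' frontier S₀) with hm
  have hofr : o ∉ frontier S₀ := fun h => h.2 hoS₀
  have hbdd : BddBelow (g '' frontier S₀) := by
    refine ⟨0, ?_⟩
    rintro y ⟨z, hz, rfl⟩
    exact hg0 z (fun h => hofr (h ▸ hz))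
  have hmle : ∀ z ∈ frontier S₀, m ≤ g z := fun z hz => csInf_le hbdd ⟨z, hz, rfl⟩
  by_cases hxint : x ∈ interior S₀
  swap
  · exact hmle x ⟨subset_closure hxS, hxint⟩
  have hgc : ContinuousOn g (D \ {o}) := harmonic_continuousOn hgh
  have hgbig : ∀ᶠ y in 𝓝[≠] o, m ≤ g y := by
    obtain ⟨C, hC⟩ := hgK
    have hK : ∀ᶠ y in 𝓝[≠] o, greenKernel d y o ≤ -(m + C) :=
      (greenKernel_tendsto_atBot hd o).eventually_le_atBot _
    filter_upwards [hC, hK] with y h1 h2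
    have h3 := (abs_le.mp h1).1
    linarith
  rw [eventually_nhdsWithin_iff, Metric.eventually_nhds_iff] at hgbig
  obtain ⟨ε₁, hε₁pos, hε₁⟩ := hgbig
  obtain ⟨r, hrpos, hr⟩ := Metric.isOpen_iff.mp isOpen_interior o hoS₀
  have hdxo : 0 < dist x o := dist_pos.mpr hxo
  set ε : ℝ := min (min (r/2) (ε₁/2)) (dist x o / 2) with hε
  have hεpos : 0 < ε := lt_min (lt_min (by linarith) (by linarith)) (by linarith)
  have hεr : ε ≤ r/2 := (min_le_left _ _).trans (min_le_left _ _)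
  have hεε₁ : ε < ε₁ :=
    lt_of_le_of_lt ((min_le_left _ _).trans (min_le_right _ _)) (by linarith)
  have hεx : ε < dist x o := lt_of_le_of_lt (min_le_right _ _) (by linarith)
  have hballε : Metric.closedBall o ε ⊆ interior S₀ := by
    refine subset_trans ?_ hr
    intro y hy
    rw [Metric.mem_closedBall] at hy
    rw [Metric.mem_ball]
    linarith
  set W : Set (EuclideanSpace ℝ (Fin d)) := interior S₀ \ Metric.closedBall o ε with hWdef
  have hxW : x ∈ W := by
    refine ⟨hxint, ?_⟩
    intro hc
    rw [Metric.mem_closedBall] at hc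
    linarith
  have hWopen : IsOpen W := isOpen_interior.sdiff Metric.isClosed_closedBall
  have hWclD : closure W ⊆ D \ {o} := by
    intro y hy
    have h1 : y ∈ closure S₀ := closure_mono (fun z hz => interior_subset hz.1) hy
    have h2 : y ∉ Metric.ball o ε := by
      have hcl : closure W ⊆ (Metric.ball o ε)ᶜ :=
        closure_minimal
          (fun z hz hball => hz.2 (Metric.ball_subset_closedBall hball))
          Metric.isOpen_ball.isClosed_compl
      exact hcl hy
    refine ⟨hS₀D h1, ?_⟩
    intro hyo
    rw [Set.mem_singleton_iff] at hyo
    subst hyo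
    exact h2 (Metric.mem_ball_self hεpos)
  have hWcl_comp : IsCompact (closure W) :=
    hS₀c.of_isClosed_subset isClosed_closure
      (closure_mono (fun z hz => interior_subset hz.1))
  have hfr : ∀ y ∈ frontier W, m ≤ g y := by
    intro y hy
    have hcase : y ∈ frontier (interior S₀) ∪ frontier (Metric.closedBall o ε) := by
      have h1 := frontier_inter_subset (interior S₀) (Metric.closedBall o ε)ᶜ
      have h2 : W = interior S₀ ∩ (Metric.closedBall o ε)ᶜ := by rw [hWdef, Set.diff_eq]
      rw [h2] at hy
      rcases h1 hy with h | h
      · exact Or.inl h.1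
      · right; rw [← frontier_compl]; exact h.2
    rcases hcase with h | h
    · exact hmle y (frontier_interior_subset h)
    · have hsp := frontier_closedBall_subset_sphere h
      rw [Metric.mem_sphere] at hsp
      have hyo : y ≠ o := by
        intro hh
        rw [hh, dist_self] at hsp
        linarith
      exact hε₁ (by rw [hsp]; exact hεε₁) hyo
  obtain ⟨R, hR⟩ := hWcl_comp.isBounded.subset_closedBall o
  have key : ∀ δ : ℝ, 0 < δ → m ≤ g x + δ * R^2 := by
    intro δ hδ
    set F : EuclideanSpace ℝ (Fin d) → ℝ := fun y => -(g y) + δ * ‖y - o‖^2 with hF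
    have hFc : ContinuousOn F (closure W) := by
      refine ContinuousOn.add ((hgc.mono hWclD).neg) ?_
      exact (continuous_const.mul
        (((continuous_id.sub continuous_const).norm).pow 2)).continuousOn
    obtain ⟨x', hx'mem, hx'max⟩ := hWcl_comp.exists_isMaxOn ⟨x, subset_closure hxW⟩ hFc
    have hx'fr : x' ∈ frontier W := by
      rcases ((closure_eq_self_union_frontier W) ▸ hx'mem : x' ∈ W ∪ frontier W)
        with hx'W | h
      · exfalso
        obtain ⟨ρ', hρ'pos, hρ'⟩ := Metric.isOpen_iff.mp hWopen x' hx'W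
        set ρ : ℝ := ρ'/2 with hρdef
        have hρpos : 0 < ρ := by rw [hρdef]; linarith
        have hball : Metric.closedBall x' ρ ⊆ W :=
          (Metric.closedBall_subset_ball (by rw [hρdef]; linarith)).trans hρ'
        have hballD : Metric.closedBall x' ρ ⊆ D \ {o} :=
          fun y hy => hWclD (subset_closure (hball hy))
        have hmv : g x' = ∫ z, g (x' + ρ • (z : EuclideanSpace ℝ (Fin d))) ∂(usm d) :=
          harmonic_mean_value hd1 hgh (hWclD (subset_closure hx'W)) hρpos hballD
        have hsq := mean_sq hd1 x' o ρ
        have hcontg : Continuous fun z : Metric.sphere (0 : EuclideanSpace ℝ (Fin d)) 1 =>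
            g (x' + ρ • (z : EuclideanSpace ℝ (Fin d))) :=
          hgc.comp_continuous (continuous_const.add (continuous_subtype_val.const_smul ρ))
            (fun z => hballD (add_smul_mem_closedBall x' hρpos.le z))
        have hint1 : Integrable
            (fun z : Metric.sphere (0 : EuclideanSpace ℝ (Fin d)) 1 =>
              g (x' + ρ • (z : EuclideanSpace ℝ (Fin d)))) (usm d) :=
          integrable_usm _ hcontg
        have hint2 : Integrable
            (fun z : Metric.sphere (0 : EuclideanSpace ℝ (Fin d)) 1 =>
              ‖x' + ρ • (z : EuclideanSpace ℝ (Fin d)) - o‖^2) (usm d) :=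
          integrable_usm _
            (((continuous_const.add (continuous_subtype_val.const_smul ρ)).sub
              continuous_const).norm.pow 2)
        have hFeq : (∫ z, F (x' + ρ • (z : EuclideanSpace ℝ (Fin d))) ∂(usm d))
            = F x' + δ * ρ^2 := by
          simp only [hF]
          have hint1' : Integrable
              (fun z : Metric.sphere (0 : EuclideanSpace ℝ (Fin d)) 1 =>
                -(g (x' + ρ • (z : EuclideanSpace ℝ (Fin d))))) (usm d) := hint1.neg
          have hint2' : Integrable
              (fun z : Metric.sphere (0 : EuclideanSpace ℝ (Fin d)) 1 =>
                δ * ‖x' + ρ • (z : EuclideanSpace ℝ (Fin d)) - o‖^2) (usm d) :=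
            hint2.const_mul δ
          rw [integral_add hint1' hint2', integral_neg, ← hmv, integral_const_mul, hsq]
          ring
        have hptle : ∀ z : Metric.sphere (0 : EuclideanSpace ℝ (Fin d)) 1,
            F (x' + ρ • (z : EuclideanSpace ℝ (Fin d))) ≤ F x' :=
          fun z => hx'max (subset_closure (hball (add_smul_mem_closedBall x' hρpos.le z)))
        have hFint : Integrable
            (fun z : Metric.sphere (0 : EuclideanSpace ℝ (Fin d)) 1 =>
              F (x' + ρ • (z : EuclideanSpace ℝ (Fin d)))) (usm d) := by
          simp only [hF]
          exact hint1.neg.add (hint2.const_mul δ)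
        have hle : (∫ z, F (x' + ρ • (z : EuclideanSpace ℝ (Fin d))) ∂(usm d)) ≤ F x' := by
          calc (∫ z, F (x' + ρ • (z : EuclideanSpace ℝ (Fin d))) ∂(usm d))
              ≤ ∫ _z, F x' ∂(usm d) := integral_mono hFint (integrable_const _) hptle
            _ = F x' := by rw [integral_const, probReal_univ, one_smul]
        rw [hFeq] at hle
        have hpos : 0 < δ * ρ^2 := by positivity
        linarith
      · exact h
    have h1 : F x ≤ F x' := hx'max (subset_closure hxW)
    have h2 : m ≤ g x' := hfr x' hx'fr
    have h3 : ‖x' - o‖ ≤ R := by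
      have hmem := hR hx'mem
      rw [Metric.mem_closedBall, dist_eq_norm] at hmem
      exact hmem
    have h4 : ‖x' - o‖^2 ≤ R^2 := pow_le_pow_left₀ (norm_nonneg _) h3 2
    have h5 : 0 ≤ ‖x - o‖^2 := sq_nonneg _
    simp only [hF] at h1
    nlinarith [mul_le_mul_of_nonneg_left h4 hδ.le, mul_nonneg hδ.le h5]
  refine le_of_forall_pos_le_add ?_
  intro η hη
  have hkey := key (η / (R^2 + 1)) (by positivity)
  have hle2 : (η / (R^2+1)) * R^2 ≤ η := by
    rw [div_mul_eq_mul_div, div_le_iff₀ (by positivity)]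
    nlinarith [sq_nonneg R]
  linarith

end
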